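/- Consider the problem (IP₁): minimize Σᵢ(δᵢyᵢ + eᵢxᵢ) + Σⱼ ζⱼzⱼ + c₀ over x, y ∈ ℝ^l, z ∈ ℝ^k subject to c₁ ≤ Σᵢ(αᵢyᵢ + bᵢxᵢ) + Σⱼ zⱼ ≤ c₂ and ½xᵢ² ≤ yᵢ for all i. Suppose: (i) (IP₁) has a feasible point; (ii) for each i ∈ {1,2}, it is NOT the case that A_s is positive semidefinite and there exists ω with b_s = A_sω and cᵢ = ½ωᵀA_sω; and (iii) A_s ≠ 0. Then the infimum of (IP₁) equals sup over ν₁ ≥ 0, ν₂ ≥ 0 of ν₁c₁ − ν₂c₂ + c₀ + Σᵢ hᵢ(ν₁,ν₂) + g(ν₁,ν₂) (as extended real numbers), where, writing s = ν₂ − ν₁: hᵢ(ν₁,ν₂) = −(sbᵢ + eᵢ)²/(2(sαᵢ + δᵢ)) if sαᵢ + δᵢ > 0, hᵢ(ν₁,ν₂) = 0 if sαᵢ + δᵢ = 0 and eᵢ + sbᵢ = 0, and hᵢ(ν₁,ν₂) = −∞ otherwise; and g(ν₁,ν₂) = 0 if ζⱼ + s = 0 for all j = 1,…,k, and g(ν₁,ν₂)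 = −∞ otherwise. -/

import Mathlib

open scoped Classical
open Matrix

/-- The objective `f(x,u,w) = Σᵢ(½δᵢxᵢ² + eᵢxᵢ) + Σⱼ(ζⱼuⱼwⱼ + ½wⱼ² + ηⱼwⱼ)` of problem (P₁). -/
noncomputable def quadObj {l k : ℕ} (δ e : Fin l → ℝ) (ζ η : Fin k → ℝ)
    (x : Fin l → ℝ) (u w : Fin k → ℝ) : ℝ :=
  (∑ i, ((1/2) * δ i * x i ^ 2 + e i * x i)) +
    ∑ j, (ζ j * u j * w j + (1/2) * w j ^ 2 + η j * w j)

/-- The constraint function `h̄(x,u,w) = Σᵢ(½αᵢxᵢ² + bᵢxᵢ) + Σⱼ uⱼwⱼ` (no constant term). -/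
noncomputable def quadConBar {l k : ℕ} (α b : Fin l → ℝ)
    (x : Fin l → ℝ) (u w : Fin k → ℝ) : ℝ :=
  (∑ i, ((1/2) * α i * x i ^ 2 + b i * x i)) + ∑ j, u j * w j

/-- The SOCP objective `Σᵢ(δᵢyᵢ + eᵢxᵢ) + Σⱼ ζⱼzⱼ + c₀` of the reformulation. -/
noncomputable def socpObj {l k : ℕ} (δ e : Fin l → ℝ) (ζ : Fin k → ℝ) (c₀ : ℝ)
    (x y : Fin l → ℝ) (z : Fin k → ℝ) : ℝ :=
  (∑ i, (δ i * y i + e i * x i)) + (∑ j, ζ j * z j) + c₀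

/-- The linear part `Σᵢ(αᵢyᵢ + bᵢxᵢ) + Σⱼ zⱼ` of the SOCP constraint. -/
noncomputable def socpConLhs {l k : ℕ} (α b : Fin l → ℝ)
    (x y : Fin l → ℝ) (z : Fin k → ℝ) : ℝ :=
  (∑ i, (α i * y i + b i * x i)) + ∑ j, z j

/-- The `(l+2k) × (l+2k)` real symmetric matrix
`A_s = blockDiag(α₁, …, α_l, E₂, …, E₂)` with `k` copies of `E₂ = [[0,1],[1,0]]`. -/
noncomputable def Asmat (l k : ℕ) (α : Fin l → ℝ) :
    Matrix (Fin (l + 2 * k)) (Fin (l + 2 * k)) ℝ :=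
  fun i j =>
    if hi : (i : ℕ) < l then (if i = j then α ⟨(i : ℕ), hi⟩ else 0)
    else if _hj : (j : ℕ) < l then 0
    else if ((i : ℕ) - l) / 2 = ((j : ℕ) - l) / 2 ∧ ((i : ℕ) - l) % 2 ≠ ((j : ℕ) - l) % 2
      then 1 else 0

/-- The vector `b_s = (b₁, …, b_l, 0, …, 0) ∈ ℝ^{l+2k}`. -/
noncomputable def bsvec (l k : ℕ) (b : Fin l → ℝ) : Fin (l + 2 * k) → ℝ :=
  fun i => if hi : (i : ℕ) < l then b ⟨(i : ℕ), hi⟩ else 0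

/-- The degenerate case excluded by Assumption 3.2 of Jiang–Li–Wu: `A_s ⪰ 0`,
`b_s ∈ Range(A_s)` and `c' = ½ωᵀA_sω` for `ω` with `b_s = A_sω`. -/
def DegenerateCase (l k : ℕ) (α b : Fin l → ℝ) (c' : ℝ) : Prop :=
  (Asmat l k α).PosSemidef ∧ ∃ ω : Fin (l + 2 * k) → ℝ,
    bsvec l k b = (Asmat l k α).mulVec ω ∧ c' = (1/2) * (ω ⬝ᵥ (Asmat l k α).mulVec ω)

/-- The optimal value (in the extended reals) of the interval-constrained SOCP problem (IP₁). -/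
noncomputable def socpValInt {l k : ℕ} (δ e α b : Fin l → ℝ) (ζ : Fin k → ℝ)
    (c₀ c₁ c₂ : ℝ) : EReal :=
  sInf {v : EReal | ∃ (x y : Fin l → ℝ) (z : Fin k → ℝ),
    c₁ ≤ socpConLhs α b x y z ∧ socpConLhs α b x y z ≤ c₂ ∧ (∀ i, (1/2) * x i ^ 2 ≤ y i) ∧
    v = (socpObj δ e ζ c₀ x y z : EReal)}

/-- The dual term `hᵢ(ν₁,ν₂)` (written in terms of `s = ν₂ − ν₁`) of Theorem 3.6 of
Jiang–Li–Wu, with values in `ℝ ∪ {−∞}`. -/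
noncomputable def hDual (αi δi bi ei s : ℝ) : EReal :=
  if 0 < s * αi + δi then ((-(s * bi + ei) ^ 2 / (2 * (s * αi + δi)) : ℝ) : EReal)
  else if s * αi + δi = 0 ∧ ei + s * bi = 0 then (0 : EReal)
  else ⊥

/-- The dual term `g(ν₁,ν₂)` (written in terms of `s = ν₂ − ν₁`) of Theorem 3.6 of
Jiang–Li–Wu, with values in `ℝ ∪ {−∞}`. -/
noncomputable def gDual {k : ℕ} (ζ : Fin k → ℝ) (s : ℝ) : EReal :=
  if ∀ j, ζ j + s = 0 then (0 : EReal) else ⊥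

/-!
For `s = ν₂ - ν₁` the term `Σᵢ hᵢ + g` is the infimum of the Lagrangian `F + s • G` over the
region `x ^ 2 / 2 ≤ y`, computed coordinate by coordinate (`F`, `G` are the linear objective and
constraint); this gives weak duality. For strong duality fix `r` below the primal value. If some
point with `F < r` violates, say, `G ≤ c₂`, then still `F ≥ r` on the level set `G = c₂`. When
the region also meets `G < c₂`, convexity separates the slopes `(r - F) / (G - c₂)` on the two
sides of the level set, and any separating value is a multiplier. Otherwise `G ≥ c₂` on the
whole region, which leaves each coordinate of `G` either zero or with a unique minimiser; a large
multiplier then penalises the distance to the minimiser quadratically, so it beats the linear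
objective up to any `ε > 0`.
-/

open Filter Topology

lemma EReal.coe_finset_sum {ι : Type*} (s : Finset ι) (f : ι → ℝ) :
    ((∑ i ∈ s, f i : ℝ) : EReal) = ∑ i ∈ s, (f i : EReal) :=
  map_sum (⟨⟨Real.toEReal, EReal.coe_zero⟩, EReal.coe_add⟩ : ℝ →+ EReal) f s

lemma neg_sq_div_two_mul_le {A B x y : ℝ} (hA : 0 < A) (hxy : (1/2) * x ^ 2 ≤ y) :
    -B ^ 2 / (2 * A) ≤ A * y + B * x := by
  rw [div_le_iff₀ (by positivity)]
  nlinarith [sq_nonneg (A * x + B), mul_le_mul_of_nonneg_left hxy (mul_pos hA hA).le]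

/-- The infimum of `(x, y) ↦ A * y + B * x` over the region `x ^ 2 / 2 ≤ y`. -/
noncomputable def parabInf (A B : ℝ) : EReal :=
  if 0 < A then ((-B ^ 2 / (2 * A) : ℝ) : EReal) else if A = 0 ∧ B = 0 then 0 else ⊥

lemma hDual_eq_parabInf (αi δi bi ei s : ℝ) :
    hDual αi δi bi ei s = parabInf (s * αi + δi) (s * bi + ei) := by
  simp only [hDual, parabInf, add_comm ei]

lemma parabInf_ne_bot_iff {A B : ℝ} : parabInf A B ≠ ⊥ ↔ 0 < A ∨ A = 0 ∧ B = 0 := by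
  unfold parabInf
  split_ifs with h₁ h₂ <;> simp [*]

lemma parabInf_le {A B x y : ℝ} (hxy : (1/2) * x ^ 2 ≤ y) :
    parabInf A B ≤ ((A * y + B * x : ℝ) : EReal) := by
  unfold parabInf
  split_ifs with hA h
  · exact EReal.coe_le_coe_iff.2 (neg_sq_div_two_mul_le hA hxy)
  · simp [h.1, h.2]
  · exact bot_le

lemma exists_eq_parabInf {A B : ℝ} (h : parabInf A B ≠ ⊥) :
    ∃ x y : ℝ, (1/2) * x ^ 2 ≤ y ∧ parabInf A B = ((A * y + B * x : ℝ) : EReal) := by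
  rcases parabInf_ne_bot_iff.1 h with hA | ⟨rfl, rfl⟩
  · refine ⟨-B / A, (1/2) * (-B / A) ^ 2, le_rfl, ?_⟩
    rw [parabInf, if_pos hA, EReal.coe_eq_coe_iff]
    field_simp
    ring
  · exact ⟨0, 0, by norm_num, by simp [parabInf]⟩

lemma exists_lt_of_parabInf_eq_bot {A B : ℝ} (h : parabInf A B = ⊥) (c : ℝ) :
    ∃ x y : ℝ, (1/2) * x ^ 2 ≤ y ∧ A * y + B * x < c := by
  have hAB : A ≤ 0 ∧ ¬(A = 0 ∧ B = 0) := by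
    by_contra! h'
    exact parabInf_ne_bot_iff.2 (by grind) h
  obtain hA | rfl := hAB.1.lt_or_eq
  · have hA' : 0 < -A := neg_pos.2 hA
    refine ⟨0, (|c| + 1) / -A, by simpa using by positivity, ?_⟩
    have : A * ((|c| + 1) / -A) = -(|c| + 1) := by
      rw [mul_div_assoc', div_neg, mul_comm, mul_div_cancel_right₀ _ hA.ne]
    linarith [neg_abs_le c]
  · have hB : B ≠ 0 := fun hB => hAB.2 ⟨rfl, hB⟩
    refine ⟨-(|c| + 1) / B, (1/2) * (-(|c| + 1) / B) ^ 2, le_rfl, ?_⟩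
    have : B * (-(|c| + 1) / B) = -(|c| + 1) := by field_simp
    linarith [neg_abs_le c]

def parabRegion (l k : ℕ) : Set ((Fin l → ℝ) × (Fin l → ℝ) × (Fin k → ℝ)) :=
  {w | ∀ i, (1/2) * w.1 i ^ 2 ≤ w.2.1 i}

lemma convex_parabRegion (l k : ℕ) : Convex ℝ (parabRegion l k) := by
  intro w hw w' hw' a b ha hb hab i
  simp only [Prod.fst_add, Prod.snd_add, Prod.smul_fst, Prod.smul_snd, Pi.add_apply,
    Pi.smul_apply, smul_eq_mul]
  obtain rfl : b = 1 - a := by linarith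
  nlinarith [hw i, hw' i, mul_nonneg ha hb,
    mul_nonneg (mul_nonneg ha hb) (sq_nonneg (w.1 i - w'.1 i))]

section LinForm

variable {l k : ℕ}

def linForm (p q : Fin l → ℝ) (r : Fin k → ℝ) :
    ((Fin l → ℝ) × (Fin l → ℝ) × (Fin k → ℝ)) →ₗ[ℝ] ℝ where
  toFun w := ∑ i, (p i * w.2.1 i + q i * w.1 i) + ∑ j, r j * w.2.2 j
  map_add' w w' := by
    simp only [Prod.fst_add, Prod.snd_add, Pi.add_apply, mul_add, Finset.sum_add_distrib]
    ring
  map_smul' a w := by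
    simp only [Prod.smul_fst, Prod.smul_snd, Pi.smul_apply, smul_eq_mul, RingHom.id_apply,
      Finset.mul_sum, mul_add]
    congr 1 <;> refine Finset.sum_congr rfl fun _ _ => by ring

lemma linForm_apply (p q : Fin l → ℝ) (r : Fin k → ℝ) (w) :
    linForm p q r w = ∑ i, (p i * w.2.1 i + q i * w.1 i) + ∑ j, r j * w.2.2 j := rfl

lemma linForm_smul_add (p q p' q' : Fin l → ℝ) (r r' : Fin k → ℝ) (s : ℝ) (w) :
    linForm (s • p + p') (s • q + q') (s • r + r') w =
      s * linForm p q r w + linForm p' q' r' w := by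
  simp only [linForm_apply, Pi.add_apply, Pi.smul_apply, smul_eq_mul, add_mul, mul_add,
    Finset.sum_add_distrib, Finset.mul_sum, mul_assoc]
  ring

lemma linForm_neg (p q : Fin l → ℝ) (r : Fin k → ℝ) (w) :
    linForm (-p) (-q) (-r) w = -linForm p q r w := by
  simp only [linForm_apply, Pi.neg_apply, neg_mul, Finset.sum_neg_distrib, ← neg_add]

lemma linForm_single (p q : Fin l → ℝ) (r : Fin k → ℝ) (i : Fin l) (x y : ℝ) :
    linForm p q r (Pi.single i x, Pi.single i y, 0) = p i * y + q i * x := by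
  simp [linForm_apply, Pi.single_apply, Finset.sum_add_distrib]

/-- The infimum of `linForm p q r` over `parabRegion l k`, computed coordinatewise. -/
noncomputable def linFormInf (p q : Fin l → ℝ) (r : Fin k → ℝ) : EReal :=
  ∑ i, parabInf (p i) (q i) + if r = 0 then 0 else ⊥

variable {p q : Fin l → ℝ} {r : Fin k → ℝ}

lemma linFormInf_le {w} (hw : w ∈ parabRegion l k) :
    linFormInf p q r ≤ linForm p q r w := by
  rw [linForm_apply, EReal.coe_add, EReal.coe_finset_sum]
  refine add_le_add (Finset.sum_le_sum fun i _ => parabInf_le (hw i)) ?_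
  split_ifs with hr
  · simp [hr]
  · exact bot_le

lemma eq_zero_of_bddBelow_linForm (h : BddBelow (linForm p q r '' parabRegion l k)) : r = 0 := by
  obtain ⟨R, hR⟩ := h
  by_contra hr
  obtain ⟨j, hj⟩ := Function.ne_iff.1 hr
  have := hR ⟨(0, 0, Pi.single j ((R - 1) / r j)), fun _ => by simp, rfl⟩
  simp only [linForm_apply, Pi.zero_apply, mul_zero, add_zero, Finset.sum_const_zero, zero_add,
    Pi.single_apply, mul_ite, Finset.sum_ite_eq', Finset.mem_univ, if_true,
    mul_div_cancel₀ _ hj] at this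
  linarith

lemma parabInf_ne_bot_of_bddBelow (h : BddBelow (linForm p q r '' parabRegion l k)) (i : Fin l) :
    parabInf (p i) (q i) ≠ ⊥ := by
  obtain ⟨R, hR⟩ := h
  intro hbot
  obtain ⟨x, y, hxy, hlt⟩ := exists_lt_of_parabInf_eq_bot hbot R
  have hmem : (Pi.single i x, Pi.single i y, 0) ∈ parabRegion l k := by
    intro j
    rcases eq_or_ne j i with rfl | hj
    · simpa using hxy
    · simp [hj]
  have := hR ⟨_, hmem, rfl⟩
  rw [linForm_single] at this
  linarith

lemma coe_le_linFormInf_iff {R : ℝ} :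
    (R : EReal) ≤ linFormInf p q r ↔ ∀ w ∈ parabRegion l k, R ≤ linForm p q r w := by
  refine ⟨fun h w hw => EReal.coe_le_coe_iff.1 (h.trans (linFormInf_le hw)), fun h => ?_⟩
  have hbdd : BddBelow (linForm p q r '' parabRegion l k) := ⟨R, Set.forall_mem_image.2 h⟩
  choose x y hxy hval using fun i => exists_eq_parabInf (parabInf_ne_bot_of_bddBelow hbdd i)
  have := h (x, y, 0) hxy
  rw [linFormInf, eq_zero_of_bddBelow_linForm hbdd, if_pos rfl, add_zero,
    Finset.sum_congr rfl fun i _ => hval i, ← EReal.coe_finset_sum, EReal.coe_le_coe_iff]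
  simpa [linForm_apply] using this

end LinForm

lemma ConvexOn.exists_multiplier_of_levelSet {E : Type*} [AddCommGroup E] [Module ℝ E]
    {C : Set E} {F : E → ℝ} (hF : ConvexOn ℝ C F) (G : E →ᵃ[ℝ] ℝ) {c r : ℝ}
    (hlevel : ∀ w ∈ C, G w = c → r ≤ F w)
    (hlt : ∃ u ∈ C, G u < c) (hgt : ∃ v ∈ C, c < G v) :
    ∃ μ : ℝ, ∀ w ∈ C, r ≤ F w + μ * (G w - c) := by
  -- the point of `[u, v]` on the level set `G = c` bounds the two slopes against each other
  have chord : ∀ u ∈ C, G u < c → ∀ v ∈ C, c < G v →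
      (r - F v) / (G v - c) ≤ (F u - r) / (c - G u) := by
    intro u hu huc v hv hvc
    have hD : 0 < G v - G u := by linarith
    set a := (G v - c) / (G v - G u) with ha_def
    set b := (c - G u) / (G v - G u) with hb_def
    have hab : a + b = 1 := by rw [ha_def, hb_def]; field_simp; ring
    have ha : 0 ≤ a := div_nonneg (by linarith) hD.le
    have hb : 0 ≤ b := div_nonneg (by linarith) hD.le
    have hGm : G (a • u + b • v) = c := by
      rw [Convex.combo_affine_apply hab, smul_eq_mul, smul_eq_mul, ha_def, hb_def]
      field_simp
      ring
    have hFm := (hlevel _ (hF.1 hu hv ha hb hab) hGm).trans (hF.2 hu hv ha hb hab)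
    rw [smul_eq_mul, smul_eq_mul, ha_def, hb_def, div_mul_eq_mul_div, div_mul_eq_mul_div,
      ← add_div, le_div_iff₀ hD] at hFm
    rw [div_le_div_iff₀ (by linarith) (by linarith)]
    nlinarith
  obtain ⟨u₀, hu₀, hu₀c⟩ := hlt
  obtain ⟨v₀, hv₀, hv₀c⟩ := hgt
  set T := {t | ∃ v ∈ C, c < G v ∧ t = (r - F v) / (G v - c)}
  have hTne : T.Nonempty := ⟨_, v₀, hv₀, hv₀c, rfl⟩
  have hTle : ∀ u ∈ C, G u < c → sSup T ≤ (F u - r) / (c - G u) := fun u hu huc =>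
    csSup_le hTne fun _ ⟨v, hv, hvc, ht⟩ => ht ▸ chord u hu huc v hv hvc
  have hTbdd : BddAbove T := ⟨_, fun _ ⟨v, hv, hvc, ht⟩ => ht ▸ chord u₀ hu₀ hu₀c v hv hvc⟩
  refine ⟨sSup T, fun w hw => ?_⟩
  rcases lt_trichotomy (G w) c with hwc | hwc | hwc
  · have := hTle w hw hwc
    rw [le_div_iff₀ (by linarith)] at this
    linarith
  · simpa [hwc] using hlevel w hw hwc
  · have := le_csSup hTbdd ⟨w, hw, hwc, rfl⟩
    rw [div_le_iff₀ (by linarith)] at this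
    linarith

/-- The penalty `s * (A * y + B * x - min)` eventually dominates any linear perturbation
`D * y + E * x` around the minimiser `(-B / A, (-B / A) ^ 2 / 2)`, up to an arbitrary `η > 0`. -/
lemma eventually_neg_le_penalty {A : ℝ} (hA : 0 < A) (B D E : ℝ) {η : ℝ} (hη : 0 < η) :
    ∀ᶠ s in atTop, ∀ x y : ℝ, (1/2) * x ^ 2 ≤ y →
      -η ≤ (s * A + D) * (y - (1/2) * (-B / A) ^ 2) + (s * B + E) * (x - -B / A) := by
  set K := (A * E - D * B) ^ 2 / (2 * A ^ 2) with hK_def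
  have hT : Tendsto (fun s => s * A + D) atTop atTop :=
    tendsto_atTop_add_const_right _ D (tendsto_id.atTop_mul_const hA)
  have hK : Tendsto (fun s => K / (s * A + D)) atTop (𝓝 0) := tendsto_const_nhds.div_atTop hT
  filter_upwards [hT.eventually_gt_atTop 0, hK.eventually (gt_mem_nhds hη)] with s hpos hsmall
  intro x y hxy
  have hmin := neg_sq_div_two_mul_le (B := s * B + E) hpos hxy
  -- completing the square: the value at the minimiser exceeds the true minimum by `K / (s * A + D)`
  have hid : -(s * B + E) ^ 2 / (2 * (s * A + D)) =
      (s * A + D) * ((1/2) * (-B / A) ^ 2) + (s * B + E) * (-B / A) - K / (s * A + D) := by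
    rw [hK_def]
    field_simp
    ring
  linarith

section Multipliers

variable {l k : ℕ}

/-- Moves each coordinate with `0 < α i` to the minimiser of `α i * y + b i * x` on the parabola. -/
noncomputable def snap (α b : Fin l → ℝ) (w : (Fin l → ℝ) × (Fin l → ℝ) × (Fin k → ℝ)) :
    (Fin l → ℝ) × (Fin l → ℝ) × (Fin k → ℝ) :=
  (fun i => if 0 < α i then -b i / α i else w.1 i,
    fun i => if 0 < α i then (1/2) * (-b i / α i) ^ 2 else w.2.1 i, w.2.2)

variable {α b δ e : Fin l → ℝ} {γ ζ : Fin k → ℝ}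

lemma snap_mem {w} (hw : w ∈ parabRegion l k) : snap α b w ∈ parabRegion l k := by
  intro i
  by_cases hi : 0 < α i
  · simp [snap, hi]
  · simpa [snap, hi] using hw i

lemma linForm_snap_le (hαb : ∀ i, 0 < α i ∨ α i = 0 ∧ b i = 0) (w) {v}
    (hv : v ∈ parabRegion l k) : linForm α b (0 : Fin k → ℝ) (snap α b w) ≤ linForm α b 0 v := by
  simp only [linForm_apply, Pi.zero_apply, zero_mul, Finset.sum_const_zero, add_zero]
  refine Finset.sum_le_sum fun i _ => ?_
  rcases hαb i with hi | ⟨hα0, hb0⟩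
  · have : α i * ((1/2) * (-b i / α i) ^ 2) + b i * (-b i / α i) = -b i ^ 2 / (2 * α i) := by
      field_simp
      ring
    simp only [snap, if_pos hi, this]
    exact neg_sq_div_two_mul_le hi (hv i)
  · simp [hα0, hb0]

lemma eventually_linForm_snap_le {η : ℝ} (hη : 0 < η) :
    ∀ᶠ s in atTop, ∀ w ∈ parabRegion l k, linForm δ e ζ (snap α b w) - l * η ≤
      linForm δ e ζ w + s * (linForm α b γ w - linForm α b γ (snap α b w)) := by
  have hcoord : ∀ᶠ s in atTop, ∀ i, ∀ w ∈ parabRegion l k, -η ≤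
      (s * α i + δ i) * (w - snap α b w).2.1 i + (s * b i + e i) * (w - snap α b w).1 i := by
    refine eventually_all.2 fun i => ?_
    by_cases hi : 0 < α i
    · filter_upwards [eventually_neg_le_penalty hi (b i) (δ i) (e i) hη] with s hs w hw
      simpa [snap, hi] using hs _ _ (hw i)
    · exact .of_forall fun s w _ => by simp [snap, hi, hη.le]
  filter_upwards [hcoord] with s hs w hw
  have hlin : linForm δ e ζ w + s * (linForm α b γ w - linForm α b γ (snap α b w)) -
      linForm δ e ζ (snap α b w) =
        linForm (s • α + δ) (s • b + e) (s • γ + ζ) (w - snap α b w) := by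
    rw [linForm_smul_add, map_sub, map_sub]
    ring
  have hsum : -(l * η) ≤ linForm (s • α + δ) (s • b + e) (s • γ + ζ) (w - snap α b w) := by
    have hz : (w - snap α b w).2.2 = 0 := by simp [snap]
    rw [linForm_apply, hz]
    simp only [Pi.zero_apply, mul_zero, Finset.sum_const_zero, add_zero, Pi.add_apply,
      Pi.smul_apply, smul_eq_mul]
    calc -(l * η) = ∑ _i : Fin l, -η := by simp
      _ ≤ _ := Finset.sum_le_sum fun i _ => hs i w hw
  linarith

lemma exists_nonneg_multiplier_of_forall_le {c r r' : ℝ} (hr' : r' < r)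
    (hG : ∀ w ∈ parabRegion l k, c ≤ linForm α b γ w)
    (hfeas : ∃ v ∈ parabRegion l k, linForm α b γ v ≤ c)
    (hlevel : ∀ w ∈ parabRegion l k, linForm α b γ w = c → r ≤ linForm δ e ζ w) :
    ∃ μ ≥ 0, ∀ w ∈ parabRegion l k, r' ≤ linForm δ e ζ w + μ * (linForm α b γ w - c) := by
  have hbdd : BddBelow (linForm α b γ '' parabRegion l k) := ⟨c, Set.forall_mem_image.2 hG⟩
  obtain rfl := eq_zero_of_bddBelow_linForm hbdd
  have hαb i := parabInf_ne_bot_iff.1 (parabInf_ne_bot_of_bddBelow hbdd i)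
  obtain ⟨v, hv, hvc⟩ := hfeas
  have hη : 0 < (r - r') / (l + 1) := div_pos (by linarith) (by positivity)
  have hlη : l * ((r - r') / (l + 1)) ≤ r - r' := by
    rw [mul_div_assoc', div_le_iff₀ (by positivity)]
    nlinarith
  refine Eventually.exists (f := atTop) ?_
  filter_upwards [eventually_ge_atTop 0,
    eventually_linForm_snap_le (δ := δ) (e := e) (ζ := ζ) hη] with s hs0 hs
  refine ⟨hs0, fun w hw => ?_⟩
  have hsnap : linForm α b 0 (snap α b w) = c :=
    le_antisymm ((linForm_snap_le hαb w hv).trans hvc) (hG _ (snap_mem hw))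
  have := hs w hw
  rw [hsnap] at this
  linarith [hlevel _ (snap_mem hw) hsnap]

lemma exists_nonneg_multiplier {c r r' : ℝ} (hr' : r' < r)
    (hlevel : ∀ w ∈ parabRegion l k, linForm α b γ w = c → r ≤ linForm δ e ζ w)
    (hbad : ∃ u ∈ parabRegion l k, c < linForm α b γ u ∧ linForm δ e ζ u < r)
    (hfeas : ∃ v ∈ parabRegion l k, linForm α b γ v ≤ c) :
    ∃ μ ≥ 0, ∀ w ∈ parabRegion l k, r' ≤ linForm δ e ζ w + μ * (linForm α b γ w - c) := by
  by_cases hG : ∀ v ∈ parabRegion l k, c ≤ linForm α b γ v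
  · exact exists_nonneg_multiplier_of_forall_le hr' hG hfeas hlevel
  push Not at hG
  obtain ⟨u, hu, huc, hur⟩ := hbad
  obtain ⟨μ, hμ⟩ := ConvexOn.exists_multiplier_of_levelSet
    ((linForm δ e ζ).convexOn (convex_parabRegion l k)) (linForm α b γ).toAffineMap hlevel
    hG ⟨u, hu, huc⟩
  simp only [LinearMap.coe_toAffineMap] at hμ
  have hμ0 : 0 < μ := pos_of_mul_pos_left (by linarith [hμ u hu]) (sub_pos.2 huc).le
  exact ⟨μ, hμ0.le, fun w hw => hr'.le.trans (hμ w hw)⟩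

lemma exists_interval_multipliers {c₁ c₂ r r' : ℝ} (hc₁₂ : c₁ ≤ c₂) (hr' : r' < r)
    (hfeas : ∃ v ∈ parabRegion l k, c₁ ≤ linForm α b γ v ∧ linForm α b γ v ≤ c₂)
    (hr : ∀ w ∈ parabRegion l k, c₁ ≤ linForm α b γ w → linForm α b γ w ≤ c₂ →
      r ≤ linForm δ e ζ w) :
    ∃ ν₁ ≥ 0, ∃ ν₂ ≥ 0, ∀ w ∈ parabRegion l k,
      r' ≤ linForm δ e ζ w + ν₁ * (c₁ - linForm α b γ w) + ν₂ * (linForm α b γ w - c₂) := by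
  obtain ⟨v, hv, hv₁, hv₂⟩ := hfeas
  by_cases hgood : ∀ w ∈ parabRegion l k, r ≤ linForm δ e ζ w
  · exact ⟨0, le_rfl, 0, le_rfl, fun w hw => by linarith [hgood w hw]⟩
  push Not at hgood
  obtain ⟨u, hu, hur⟩ := hgood
  rcases lt_or_ge c₂ (linForm α b γ u) with hu₂ | hu₂
  · obtain ⟨μ, hμ, hL⟩ := exists_nonneg_multiplier hr'
      (fun w hw hwc => hr w hw (hc₁₂.trans hwc.ge) hwc.le) ⟨u, hu, hu₂, hur⟩ ⟨v, hv, hv₂⟩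
    exact ⟨0, le_rfl, μ, hμ, fun w hw => by linarith [hL w hw]⟩
  · have hu₁ : linForm α b γ u < c₁ := lt_of_not_ge fun h => (hr u hu h hu₂).not_gt hur
    -- the mirror image: the constraint `-G ≤ -c₁` is violated at `u`
    obtain ⟨μ, hμ, hL⟩ := exists_nonneg_multiplier (α := -α) (b := -b) (γ := -γ) (c := -c₁) hr'
      (fun w hw hwc => hr w hw (by rw [linForm_neg] at hwc; linarith)
        (by rw [linForm_neg] at hwc; linarith))
      ⟨u, hu, by rw [linForm_neg]; linarith, hur⟩ ⟨v, hv, by rw [linForm_neg]; linarith⟩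
    exact ⟨μ, hμ, 0, le_rfl, fun w hw => by linarith [linForm_neg α b γ w ▸ hL w hw]⟩

lemma socpObj_eq_linForm (c₀ : ℝ) (x y : Fin l → ℝ) (z : Fin k → ℝ) :
    socpObj δ e ζ c₀ x y z = linForm δ e ζ (x, y, z) + c₀ := rfl

lemma socpConLhs_eq_linForm (x y : Fin l → ℝ) (z : Fin k → ℝ) :
    socpConLhs α b x y z = linForm α b 1 (x, y, z) := by
  simp [socpConLhs, linForm_apply]

lemma sum_hDual_add_gDual (s : ℝ) :
    ∑ i, hDual (α i) (δ i) (b i) (e i) s + gDual ζ s =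
      linFormInf (s • α + δ) (s • b + e) (s • 1 + ζ) := by
  simp only [linFormInf, hDual_eq_parabInf, Pi.add_apply, Pi.smul_apply, smul_eq_mul, gDual,
    funext_iff, Pi.one_apply, mul_one, Pi.zero_apply, add_comm s]

lemma coe_le_dualObj_iff {c₀ c₁ c₂ ν₁ ν₂ R : ℝ} :
    (R : EReal) ≤ ((ν₁ * c₁ - ν₂ * c₂ + c₀ : ℝ) : EReal) +
        (∑ i, hDual (α i) (δ i) (b i) (e i) (ν₂ - ν₁)) + gDual ζ (ν₂ - ν₁) ↔
      ∀ w ∈ parabRegion l k, R ≤ linForm δ e ζ w + c₀ + ν₁ * (c₁ - linForm α b 1 w) +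
        ν₂ * (linForm α b 1 w - c₂) := by
  rw [add_assoc, sum_hDual_add_gDual, add_comm,
    ← EReal.sub_le_iff_le_add (.inl (EReal.coe_ne_bot _)) (.inl (EReal.coe_ne_top _)),
    ← EReal.coe_sub, coe_le_linFormInf_iff]
  refine forall₂_congr fun w _ => ?_
  rw [linForm_smul_add]
  constructor <;> intro h <;> linarith

end Multipliers

theorem stmt_18_general (l k : ℕ) (δ e α b : Fin l → ℝ) (ζ : Fin k → ℝ) (c₀ c₁ c₂ : ℝ)
    (hc₁₂ : c₁ ≤ c₂)
    (hfeas : ∃ (x y : Fin l → ℝ) (z : Fin k → ℝ),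
      c₁ ≤ socpConLhs α b x y z ∧ socpConLhs α b x y z ≤ c₂ ∧ (∀ i, (1/2) * x i ^ 2 ≤ y i)) :
    socpValInt δ e α b ζ c₀ c₁ c₂ =
      sSup {v : EReal | ∃ ν₁ ν₂ : ℝ, 0 ≤ ν₁ ∧ 0 ≤ ν₂ ∧
        v = ((ν₁ * c₁ - ν₂ * c₂ + c₀ : ℝ) : EReal) +
          (∑ i, hDual (α i) (δ i) (b i) (e i) (ν₂ - ν₁)) + gDual ζ (ν₂ - ν₁)} := by
  refine le_antisymm (EReal.ge_of_forall_gt_iff_ge.1 fun r' hr' => ?_) (sSup_le ?_)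
  · obtain ⟨r, hr'r, hr⟩ := EReal.exists_between_coe_real hr'
    have hprimal : ∀ w ∈ parabRegion l k, c₁ ≤ linForm α b 1 w → linForm α b 1 w ≤ c₂ →
        r - c₀ ≤ linForm δ e ζ w := by
      rintro ⟨x, y, z⟩ hw h₁ h₂
      rw [← socpConLhs_eq_linForm] at h₁ h₂
      have := hr.trans_le (sInf_le ⟨x, y, z, h₁, h₂, hw, rfl⟩)
      rw [socpObj_eq_linForm, EReal.coe_lt_coe_iff] at this
      linarith
    obtain ⟨x, y, z, h₁, h₂, hw⟩ := hfeas
    rw [socpConLhs_eq_linForm] at h₁ h₂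
    obtain ⟨ν₁, hν₁, ν₂, hν₂, hL⟩ := exists_interval_multipliers hc₁₂
      (sub_lt_sub_right (EReal.coe_lt_coe_iff.1 hr'r) c₀) ⟨(x, y, z), hw, h₁, h₂⟩ hprimal
    refine le_sSup_of_le ⟨ν₁, ν₂, hν₁, hν₂, rfl⟩ (coe_le_dualObj_iff.2 fun w hw => ?_)
    linarith [hL w hw]
  · rintro _ ⟨ν₁, ν₂, hν₁, hν₂, rfl⟩
    refine le_sInf ?_
    rintro _ ⟨x, y, z, h₁, h₂, hw, rfl⟩
    refine EReal.ge_of_forall_gt_iff_ge.1 fun R hR => ?_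
    have := coe_le_dualObj_iff.1 hR.le (x, y, z) hw
    rw [socpConLhs_eq_linForm] at h₁ h₂
    rw [socpObj_eq_linForm, EReal.coe_le_coe_iff]
    nlinarith

/-- Theorem 3.6 of Jiang–Li–Wu: under Assumption 3.2, strong duality holds between the
interval-constrained SOCP problem (IP₁) and its two-variable Lagrangian dual (ID₁). -/
theorem stmt_18 (l k : ℕ) (δ e α b : Fin l → ℝ) (ζ : Fin k → ℝ) (c₀ c₁ c₂ : ℝ)
    (hc₁₂ : c₁ ≤ c₂)
    (hfeas : ∃ (x y : Fin l → ℝ) (z : Fin k → ℝ),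
      c₁ ≤ socpConLhs α b x y z ∧ socpConLhs α b x y z ≤ c₂ ∧ (∀ i, (1/2) * x i ^ 2 ≤ y i))
    (hnd₁ : ¬ DegenerateCase l k α b c₁) (hnd₂ : ¬ DegenerateCase l k α b c₂)
    (hAne : Asmat l k α ≠ 0) :
    socpValInt δ e α b ζ c₀ c₁ c₂ =
      sSup {v : EReal | ∃ ν₁ ν₂ : ℝ, 0 ≤ ν₁ ∧ 0 ≤ ν₂ ∧
        v = ((ν₁ * c₁ - ν₂ * c₂ + c₀ : ℝ) : EReal) +
          (∑ i, hDual (α i) (δ i) (b i) (e i) (ν₂ - ν₁)) + gDual ζ (ν₂ - ν₁)} :=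
  stmt_18_general l k δ e α b ζ c₀ c₁ c₂ hc₁₂ hfeas
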